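/- arXiv:2105.14491 — 9 statements merged into one kernel-verified Lean document; each statement's English description precedes it below -/
import Mathlib

section
/- Let h_1, …, h_n ∈ ℝ^d be a finite set of node representations, and let W ∈ ℝ^{d'×d} and a_1, a_2 ∈ ℝ^{d'} be arbitrary parameters. Define the GAT scoring function e(q, k) = LeakyReLU_c(a_1ᵀ(W q) + a_2ᵀ(W k)). Then there exists an index j_max ∈ {1, …, n} such that for every query index i ∈ {1, …, n} and every key index j ∈ {1, …, n}, e(h_i, h_{j_max}) ≥ e(h_i, h_j); that is, the GAT scoring function computes only static scoring (Theorem 1). -/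
open Matrix

/-- LeakyReLU with slope `c`. -/
noncomputable def leakyReLU (c x : ℝ) : ℝ := max x (c * x)

/-- The GAT scoring function `e(q,k) = LeakyReLU_c(a₁ᵀ(Wq) + a₂ᵀ(Wk))`. -/
noncomputable def gatScore {d d' : ℕ} (c : ℝ) (W : Matrix (Fin d') (Fin d) ℝ)
    (a₁ a₂ : Fin d' → ℝ) (q k : Fin d → ℝ) : ℝ :=
  leakyReLU c (a₁ ⬝ᵥ W.mulVec q + a₂ ⬝ᵥ W.mulVec k)

/-- Theorem 1 (static scoring): for any parameters, the GAT scoring function has a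
"highest scoring" key `jmax`, unconditioned on the query. -/
theorem gat_static_scoring {d d' n : ℕ} (hn : 0 < n)
    (c : ℝ) (hc0 : 0 < c) (hc1 : c < 1)
    (h : Fin n → Fin d → ℝ) (W : Matrix (Fin d') (Fin d) ℝ) (a₁ a₂ : Fin d' → ℝ) :
    ∃ jmax : Fin n, ∀ i j : Fin n,
      gatScore c W a₁ a₂ (h i) (h jmax) ≥ gatScore c W a₁ a₂ (h i) (h j) := by
  have : Nonempty (Fin n) := ⟨⟨0, hn⟩⟩
  obtain ⟨jmax, hj⟩ := Finite.exists_max (fun j : Fin n => a₂ ⬝ᵥ W.mulVec (h j))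
  refine ⟨jmax, fun i j => ?_⟩
  unfold gatScore leakyReLU
  have hle : a₁ ⬝ᵥ W.mulVec (h i) + a₂ ⬝ᵥ W.mulVec (h j)
      ≤ a₁ ⬝ᵥ W.mulVec (h i) + a₂ ⬝ᵥ W.mulVec (h jmax) := by
    linarith [hj j]
  exact max_le_max hle (by nlinarith)
end

section
/- Let h_1, …, h_n ∈ ℝ^d, W ∈ ℝ^{d'×d}, a_1, a_2 ∈ ℝ^{d'}, and let e be the GAT scoring function. Define the attention coefficients α_{ij} = exp(e(h_i, h_j)) / Σ_{j'=1}^{n} exp(e(h_i, h_{j'})). Then there exists an index j_max ∈ {1, …, n} such that for every i ∈ {1,…,n} and every j ∈ {1,…,n}, α_{i, j_max} ≥ α_{i, j}; that is, the softmax-normalized GAT attention function computes only static attention. -/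
/-!
The score `e(q, k) = LeakyReLU_c(a₁ᵀWq + a₂ᵀWk)` is monotone in the key term `a₂ᵀWk`, since
LeakyReLU is monotone for `c ≥ 0`. Hence the key maximising `a₂ᵀWh_j` maximises the score for
every query, and softmax, which divides by a common denominator, preserves that order.
-/

open Matrix

theorem leakyReLU_monotone {c : ℝ} (hc : 0 ≤ c) : Monotone (leakyReLU c) :=
  fun _ _ hxy => max_le_max hxy (mul_le_mul_of_nonneg_left hxy hc)

theorem gatScore_le_gatScore {d d' : ℕ} {c : ℝ} (hc : 0 ≤ c) (W : Matrix (Fin d') (Fin d) ℝ)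
    (a₁ a₂ : Fin d' → ℝ) (q : Fin d → ℝ) {k k' : Fin d → ℝ}
    (hkk' : a₂ ⬝ᵥ W.mulVec k ≤ a₂ ⬝ᵥ W.mulVec k') :
    gatScore c W a₁ a₂ q k ≤ gatScore c W a₁ a₂ q k' :=
  leakyReLU_monotone hc (add_le_add_right hkk' _)

theorem exp_div_sum_exp_le_exp_div_sum_exp {ι : Type*} [Fintype ι] (s : ι → ℝ) {j k : ι}
    (hjk : s j ≤ s k) :
    Real.exp (s j) / ∑ i, Real.exp (s i) ≤ Real.exp (s k) / ∑ i, Real.exp (s i) :=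
  div_le_div_of_nonneg_right (Real.exp_le_exp.mpr hjk)
    (Finset.sum_nonneg fun i _ => (Real.exp_pos (s i)).le)

theorem gat_softmax_static_attention_general {d d' n : ℕ} (hn : 0 < n)
    (c : ℝ) (hc0 : 0 < c)
    (h : Fin n → Fin d → ℝ) (W : Matrix (Fin d') (Fin d) ℝ) (a₁ a₂ : Fin d' → ℝ)
    (α : Fin n → Fin n → ℝ)
    (hα : ∀ i j, α i j = Real.exp (gatScore c W a₁ a₂ (h i) (h j)) /
      ∑ j' : Fin n, Real.exp (gatScore c W a₁ a₂ (h i) (h j'))) :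
    ∃ jmax : Fin n, ∀ i j : Fin n, α i jmax ≥ α i j := by
  have : Nonempty (Fin n) := ⟨⟨0, hn⟩⟩
  obtain ⟨jmax, hjmax⟩ := Finite.exists_max fun j => a₂ ⬝ᵥ W.mulVec (h j)
  refine ⟨jmax, fun i j => ?_⟩
  rw [hα, hα]
  exact exp_div_sum_exp_le_exp_div_sum_exp (fun j => gatScore c W a₁ a₂ (h i) (h j))
    (gatScore_le_gatScore hc0.le W a₁ a₂ (h i) (hjmax j))

/-- The softmax-normalized GAT attention coefficients compute only static attention:
there is a key `jmax` whose attention coefficient is maximal for every query. -/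
theorem gat_softmax_static_attention {d d' n : ℕ} (hn : 0 < n)
    (c : ℝ) (hc0 : 0 < c) (hc1 : c < 1)
    (h : Fin n → Fin d → ℝ) (W : Matrix (Fin d') (Fin d) ℝ) (a₁ a₂ : Fin d' → ℝ)
    (α : Fin n → Fin n → ℝ)
    (hα : ∀ i j, α i j = Real.exp (gatScore c W a₁ a₂ (h i) (h j)) /
      ∑ j' : Fin n, Real.exp (gatScore c W a₁ a₂ (h i) (h j'))) :
    ∃ jmax : Fin n, ∀ i j : Fin n, α i jmax ≥ α i j :=
  gat_softmax_static_attention_general hn c hc0 h W a₁ a₂ α hα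
end

section
/- Let h_1, …, h_n ∈ ℝ^d, W ∈ ℝ^{d'×d}, a_1, a_2 ∈ ℝ^{d'}, and let e be the GAT scoring function. Define the per-node key scores s_j = a_2ᵀ(W h_j). Then for every query vector q ∈ ℝ^d and all indices j, k ∈ {1,…,n}: if s_j ≥ s_k then e(q, h_j) ≥ e(q, h_k), and if s_j > s_k then e(q, h_j) > e(q, h_k). In particular, the ranking of GAT attention scores over the keys is the same for every query, i.e., it is unconditioned on the query node. -/
open Matrix

/-- The ranking of GAT attention scores over the keys is determined by the per-node
key scores `s j = a₂ᵀ(W h_j)`, hence is the same for every query. -/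
theorem gat_ranking_unconditioned_on_query {d d' n : ℕ}
    (c : ℝ) (hc0 : 0 < c) (hc1 : c < 1)
    (h : Fin n → Fin d → ℝ) (W : Matrix (Fin d') (Fin d) ℝ) (a₁ a₂ : Fin d' → ℝ)
    (s : Fin n → ℝ) (hs : ∀ j, s j = a₂ ⬝ᵥ W.mulVec (h j)) :
    ∀ (q : Fin d → ℝ) (j k : Fin n),
      (s j ≥ s k → gatScore c W a₁ a₂ q (h j) ≥ gatScore c W a₁ a₂ q (h k)) ∧
      (s j > s k → gatScore c W a₁ a₂ q (h j) > gatScore c W a₁ a₂ q (h k)) := by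
  have mono : StrictMono (leakyReLU c) := by
    intro x y hxy
    unfold leakyReLU
    exact max_lt_max hxy (by nlinarith)
  intro q j k
  simp only [hs] at *
  refine ⟨fun hjk => ?_, fun hjk => ?_⟩ <;> simp only [gatScore]
  · exact mono.monotone (by linarith)
  · exact mono (by linarith)
end

section
/- Let n > 1, let h_1, …, h_n ∈ ℝ^d, let W ∈ ℝ^{d'×d} and a_1, a_2 ∈ ℝ^{d'}, and let e be the GAT scoring function. Suppose φ : {1,…,n} → {1,…,n} is a mapping such that for every i ∈ {1,…,n} and every j ∈ {1,…,n} with j ≠ φ(i), e(h_i, h_{φ(i)}) > e(h_i, h_j). Then φ is a constant mapping. Consequently, for any non-constant mapping φ, no choice of parameters a_1, a_2, W makes the GAT scoring function satisfy the dynamic scoring condition for φ. -/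
open Matrix

/-- If the GAT scoring function satisfies the dynamic scoring condition for a mapping
`φ`, then `φ` is constant.  In particular GAT cannot compute dynamic attention for
any non-constant mapping. -/
theorem gat_dynamic_implies_constant {d d' n : ℕ} (hn : 1 < n)
    (c : ℝ) (hc0 : 0 < c) (hc1 : c < 1)
    (h : Fin n → Fin d → ℝ) (W : Matrix (Fin d') (Fin d) ℝ) (a₁ a₂ : Fin d' → ℝ)
    (φ : Fin n → Fin n)
    (hdyn : ∀ i j : Fin n, j ≠ φ i →
      gatScore c W a₁ a₂ (h i) (h (φ i)) > gatScore c W a₁ a₂ (h i) (h j)) :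
    ∀ i i' : Fin n, φ i = φ i' := by
  have hmono : StrictMono (leakyReLU c) := by
    intro x y hxy
    exact max_lt_max hxy (by nlinarith)
  have key : ∀ i j : Fin n, j ≠ φ i →
      a₂ ⬝ᵥ W.mulVec (h (φ i)) > a₂ ⬝ᵥ W.mulVec (h j) := by
    intro i j hj
    have := hdyn i j hj
    simp only [gatScore] at this
    have := hmono.lt_iff_lt.mp this
    linarith
  intro i i'
  by_contra hne
  have h1 := key i (φ i') (fun e => hne e.symm)
  have h2 := key i' (φ i) (fun e => hne e)
  linarith
end

section
/- Consider a multi-head GAT with H attention heads, each head m ∈ {1,…,H} having its own parameters W^{(m)} ∈ ℝ^{d'×d} and a_1^{(m)}, a_2^{(m)} ∈ ℝ^{d'} and scoring function e^{(m)}(q, k) = LeakyReLU_c(a_1^{(m)ᵀ}(W^{(m)} q) + a_2^{(m)ᵀ}(W^{(m)} k)). Then for every head m there exists an index j_max^{(m)} ∈ {1,…,n} (possibly different per head) such that for every query index i and every key index j in {1,…,n}, e^{(m)}(h_i, h_{j_max^{(m)}}) ≥ e^{(m)}(h_i, h_j); i.e., every head of a multi-head GAT separately computes only static scoring. -/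
open Matrix

lemma leakyReLU_mono {c : ℝ} (hc : 0 < c) : Monotone (leakyReLU c) := by
  intro x y hxy
  exact max_le_max hxy (by nlinarith)

/-- Every head of a multi-head GAT separately computes only static scoring:
each head `m` has a (possibly different) highest-scoring key `jmax m`,
unconditioned on the query. -/
theorem multihead_gat_static_scoring {d d' n H : ℕ} (hn : 0 < n)
    (c : ℝ) (hc0 : 0 < c) (hc1 : c < 1)
    (h : Fin n → Fin d → ℝ)
    (W : Fin H → Matrix (Fin d') (Fin d) ℝ) (a₁ a₂ : Fin H → Fin d' → ℝ) :
    ∀ m : Fin H, ∃ jmax : Fin n, ∀ i j : Fin n,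
      gatScore c (W m) (a₁ m) (a₂ m) (h i) (h jmax)
        ≥ gatScore c (W m) (a₁ m) (a₂ m) (h i) (h j) := by
  intro m
  have : Nonempty (Fin n) := ⟨⟨0, hn⟩⟩
  obtain ⟨jmax, hj⟩ := Finite.exists_max (fun j : Fin n => a₂ m ⬝ᵥ (W m).mulVec (h j))
  refine ⟨jmax, fun i j => ?_⟩
  exact leakyReLU_mono hc0 (by linarith [hj j])
end

section
/- Let h_1, …, h_n ∈ ℝ^d be pairwise distinct node representations and let φ : {1,…,n} → {1,…,n} be any mapping. Then there exist a hidden dimension d' ∈ ℕ, a weight matrix W ∈ ℝ^{d'×2d}, a bias vector b ∈ ℝ^{d'}, and a vector a ∈ ℝ^{d'} such that the GATv2 scoring function e(h_i, h_j) = aᵀ · LeakyReLU_c(W·[h_i ‖ h_j] + b) satisfies, for every i ∈ {1,…,n} and every j ∈ {1,…,n} with j ≠ φ(i), e(h_i, h_{φ(i)}) > e(h_i, h_j). That is, the GATv2 family of scoring functions computes dynamic attention for any set of pairwise distinct node representations (Theorem 2). -/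
open Matrix

/-- The GATv2 scoring function `e(q,k) = aᵀ · LeakyReLU_c(W·[q ‖ k] + b)`. -/
noncomputable def gatv2Score {d d' : ℕ} (c : ℝ) (W : Matrix (Fin d') (Fin (d + d)) ℝ)
    (b a : Fin d' → ℝ) (q k : Fin d → ℝ) : ℝ :=
  a ⬝ᵥ fun r => leakyReLU c (W.mulVec (Fin.append q k) r + b r)

/-!
Project the `n²` concatenated pairs `[h_i ‖ h_j]` to the real line by a linear functional that
is injective on them, and let `δ > 0` be smaller than every gap between the projected values.
Put a tent of half-width `δ` at the projection of each target pair `[h_m ‖ h_{φ(m)}]`: the sum of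
these tents is positive at the target pairs and vanishes at all other pairs. Since `c < 1`, the
second difference `t ↦ LeakyReLU_c(t + δ) - 2 LeakyReLU_c(t) + LeakyReLU_c(t - δ)` is a positive
multiple of such a tent, so the sum is a GATv2 score with three hidden units per target pair.
-/

open Function

theorem exists_dotProduct_injective {K ι m : Type*} [Field K] [Infinite K] [Finite ι]
    [Fintype m] {Z : ι → m → K} (hZ : Injective Z) :
    ∃ v : m → K, Injective fun i => v ⬝ᵥ Z i := by
  classical
  obtain ⟨f, hf⟩ := Module.exists_dual_forall_apply_ne_zero (K := K)
    (fun p : {p : ι × ι // p.1 ≠ p.2} => Z p.1.1 - Z p.1.2)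
    (fun p => sub_ne_zero.2 (hZ.ne p.2))
  have hfv : ∀ x, f x = (dotProductEquiv K m).symm f ⬝ᵥ x := fun x => by
    conv_lhs => rw [← (dotProductEquiv K m).apply_symm_apply f]
    rfl
  refine ⟨(dotProductEquiv K m).symm f, fun i j hij => by_contra fun hne => hf ⟨(i, j), hne⟩ ?_⟩
  simp only [hfv, dotProduct_sub, sub_eq_zero]
  exact hij

theorem exists_pos_le_abs_sub_of_injective {ι : Type*} [Finite ι] {s : ι → ℝ}
    (hs : Injective s) : ∃ δ > 0, ∀ i j, i ≠ j → δ ≤ |s i - s j| := by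
  have hsmall : ∀ᶠ δ in nhdsWithin (0 : ℝ) (Set.Ioi 0),
      ∀ p : ι × ι, p.1 ≠ p.2 → δ ≤ |s p.1 - s p.2| := by
    refine Filter.eventually_all.2 fun p => ?_
    by_cases hp : p.1 = p.2
    · exact Filter.Eventually.of_forall fun _ h => absurd hp h
    · have hgap : 0 < |s p.1 - s p.2| := abs_pos.2 (sub_ne_zero.2 (hs.ne hp))
      exact ((eventually_le_nhds hgap).filter_mono nhdsWithin_le_nhds).mono fun _ h _ => h
  obtain ⟨δ, hδgaps, hδpos⟩ := (hsmall.and self_mem_nhdsWithin).exists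
  exact ⟨δ, hδpos, fun i j hij => hδgaps (i, j) hij⟩

theorem exists_gatv2Score_eq_sum {d : ℕ} {ι : Type*} [Fintype ι] (c : ℝ)
    (w : ι → Fin (d + d) → ℝ) (β α : ι → ℝ) :
    ∃ (d' : ℕ) (W : Matrix (Fin d') (Fin (d + d)) ℝ) (b a : Fin d' → ℝ), ∀ q k,
      gatv2Score c W b a q k = ∑ r, α r * leakyReLU c (w r ⬝ᵥ Fin.append q k + β r) := by
  let e := Fintype.equivFin ι
  exact ⟨_, fun r => w (e.symm r), fun r => β (e.symm r), fun r => α (e.symm r),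
    fun q k => e.symm.sum_comp fun r => α r * leakyReLU c (w r ⬝ᵥ Fin.append q k + β r)⟩

theorem leakyReLU_eq_of_le_one {c : ℝ} (hc : c ≤ 1) (y : ℝ) :
    leakyReLU c y = ((1 + c) * y + (1 - c) * |y|) / 2 := by
  unfold leakyReLU
  rcases le_total 0 y with hy | hy
  · rw [max_eq_left (by nlinarith), abs_of_nonneg hy]
    ring
  · rw [max_eq_right (by nlinarith), abs_of_nonpos hy]
    ring

/-- For `δ ≥ 0` this is the tent `2 * max (δ - |u|) 0`. -/
noncomputable def hat (δ u : ℝ) : ℝ := |u + δ| - 2 * |u| + |u - δ|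

theorem hat_nonneg (δ u : ℝ) : 0 ≤ hat δ u := by
  have := abs_add_le (u + δ) (u - δ)
  rw [show u + δ + (u - δ) = 2 * u by ring, abs_mul, abs_two] at this
  unfold hat
  linarith

theorem hat_zero_right (δ : ℝ) : hat δ 0 = 2 * |δ| := by
  simp only [hat, zero_add, abs_zero, zero_sub, abs_neg]
  ring

theorem hat_eq_zero_of_le_abs {δ u : ℝ} (hδ : 0 ≤ δ) (hu : δ ≤ |u|) : hat δ u = 0 := by
  unfold hat
  rcases le_total 0 u with h | h
  · rw [abs_of_nonneg h] at hu
    rw [abs_of_nonneg h, abs_of_nonneg (by linarith), abs_of_nonneg (by linarith)]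
    ring
  · rw [abs_of_nonpos h] at hu
    rw [abs_of_nonpos h, abs_of_nonpos (by linarith), abs_of_nonpos (by linarith)]
    ring

theorem leakyReLU_secondDiff_eq_hat {c : ℝ} (hc : c ≤ 1) (δ u : ℝ) :
    leakyReLU c (u + δ) - 2 * leakyReLU c u + leakyReLU c (u - δ) = (1 - c) / 2 * hat δ u := by
  simp only [leakyReLU_eq_of_le_one hc, hat]
  ring

theorem gatv2_dynamic_attention_general {d n : ℕ}
    (c : ℝ) (hc1 : c < 1)
    (h : Fin n → Fin d → ℝ) (hdist : Function.Injective h)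
    (φ : Fin n → Fin n) :
    ∃ (d' : ℕ) (W : Matrix (Fin d') (Fin (d + d)) ℝ) (b a : Fin d' → ℝ),
      ∀ i j : Fin n, j ≠ φ i →
        gatv2Score c W b a (h i) (h (φ i)) > gatv2Score c W b a (h i) (h j) := by
  obtain ⟨v, hv⟩ := exists_dotProduct_injective (K := ℝ)
    ((Fin.appendEquiv d d).injective.comp (hdist.prodMap hdist))
  set s : Fin n × Fin n → ℝ := fun p => v ⬝ᵥ Fin.append (h p.1) (h p.2)
  obtain ⟨δ, hδ, hgap⟩ := exists_pos_le_abs_sub_of_injective hv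
  obtain ⟨d', W, b, a, hW⟩ := exists_gatv2Score_eq_sum c (fun _ : Fin n × Fin 3 => v)
    (fun r => ![δ, 0, -δ] r.2 - s (r.1, φ r.1)) (fun r => ![1, -2, 1] r.2)
  have hscore : ∀ i k, gatv2Score c W b a (h i) (h k) =
      (1 - c) / 2 * ∑ m, hat δ (s (i, k) - s (m, φ m)) := fun i k => by
    rw [hW, Fintype.sum_prod_type, Finset.mul_sum]
    refine Finset.sum_congr rfl fun m _ => ?_
    rw [Fin.sum_univ_three, ← leakyReLU_secondDiff_eq_hat hc1.le]
    simp only [Fin.isValue, cons_val_zero, cons_val_one, cons_val_two, tail_cons, head_cons,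
      one_mul, s]
    ring_nf
  refine ⟨d', W, b, a, fun i j hj => ?_⟩
  rw [hscore, hscore, gt_iff_lt]
  refine mul_lt_mul_of_pos_left ?_ (by linarith)
  calc ∑ m, hat δ (s (i, j) - s (m, φ m))
      = 0 := Finset.sum_eq_zero fun m _ => hat_eq_zero_of_le_abs hδ.le <|
        hgap _ _ fun him => hj (by simp_all)
    _ < hat δ (s (i, φ i) - s (i, φ i)) := by
        rw [sub_self, hat_zero_right, abs_of_pos hδ]
        positivity
    _ ≤ ∑ m, hat δ (s (i, φ i) - s (m, φ m)) :=
        Finset.single_le_sum (f := fun m => hat δ (s (i, φ i) - s (m, φ m)))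
          (fun m _ => hat_nonneg δ _) (Finset.mem_univ i)

/-- Theorem 2 (dynamic attention): for pairwise distinct node representations and any
mapping `φ`, some choice of GATv2 parameters makes `φ(i)` the strictly
highest-scoring key for every query `i`. -/
theorem gatv2_dynamic_attention {d n : ℕ}
    (c : ℝ) (hc0 : 0 < c) (hc1 : c < 1)
    (h : Fin n → Fin d → ℝ) (hdist : Function.Injective h)
    (φ : Fin n → Fin n) :
    ∃ (d' : ℕ) (W : Matrix (Fin d') (Fin (d + d)) ℝ) (b a : Fin d' → ℝ),
      ∀ i j : Fin n, j ≠ φ i →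
        gatv2Score c W b a (h i) (h (φ i)) > gatv2Score c W b a (h i) (h j) :=
  gatv2_dynamic_attention_general c hc1 h hdist φ
end

section
/- Let X ∈ ℝ^{n×d} be a matrix whose n rows are linearly independent (so in particular n ≤ d). Then for every matrix P ∈ ℝ^{n×n} there exist matrices Q, K ∈ ℝ^{d×d} such that (X·Q)·(X·K)ᵀ = P. -/
open Matrix

/-- A matrix with linearly independent rows has a right inverse. -/
lemma exists_right_inverse_of_linearIndependent_rows {n d : ℕ}
    (X : Matrix (Fin n) (Fin d) ℝ) (hX : LinearIndependent ℝ (fun i => X i)) :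
    ∃ Y : Matrix (Fin d) (Fin n) ℝ, X * Y = 1 := by
  have hinj : LinearMap.ker X.vecMulLinear = ⊥ := by
    rw [LinearMap.ker_eq_bot, coe_vecMulLinear]
    exact Matrix.vecMul_injective_iff.mpr hX
  obtain ⟨g, hg⟩ := X.vecMulLinear.exists_leftInverse_of_injective hinj
  refine ⟨(LinearMap.toMatrix' g)ᵀ, ?_⟩
  have key : (LinearMap.toMatrix' g) * Xᵀ = 1 := by
    have h1 : ((LinearMap.toMatrix' g) * Xᵀ).mulVecLin = LinearMap.id := by
      rw [Matrix.mulVecLin_mul, Matrix.mulVecLin_transpose]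
      have h2 : (LinearMap.toMatrix' g).mulVecLin = g := Matrix.toLin'_toMatrix' g
      rw [h2, hg]
    have h3 := congrArg LinearMap.toMatrix' h1
    rwa [← Matrix.toLin'_apply', LinearMap.toMatrix'_toLin' ((LinearMap.toMatrix' g) * Xᵀ), LinearMap.toMatrix'_id] at h3
  calc X * (LinearMap.toMatrix' g)ᵀ
      = ((LinearMap.toMatrix' g) * Xᵀ)ᵀ := by simp [Matrix.transpose_mul]
    _ = 1 := by rw [key]; simp

/-- If the rows of `X ∈ ℝ^{n×d}` are linearly independent, then any matrix
`P ∈ ℝ^{n×n}` can be realized as `(XQ)(XK)ᵀ` for suitable `Q, K ∈ ℝ^{d×d}`. -/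
theorem exists_QK_realizing_score_matrix {n d : ℕ}
    (X : Matrix (Fin n) (Fin d) ℝ) (hX : LinearIndependent ℝ (fun i => X i))
    (P : Matrix (Fin n) (Fin n) ℝ) :
    ∃ Q K : Matrix (Fin d) (Fin d) ℝ, (X * Q) * (X * K)ᵀ = P := by
  obtain ⟨Y, hY⟩ := exists_right_inverse_of_linearIndependent_rows X hX
  refine ⟨Y * P * Yᵀ, Y * X, ?_⟩
  have hXK : X * (Y * X) = X := by rw [← Matrix.mul_assoc, hY, Matrix.one_mul]
  have hYX : Yᵀ * Xᵀ = 1 := by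
    rw [← Matrix.transpose_mul, hY, Matrix.transpose_one]
  calc (X * (Y * P * Yᵀ)) * (X * (Y * X))ᵀ
      = X * (Y * P * Yᵀ) * Xᵀ := by rw [hXK]
    _ = (X * Y) * P * (Yᵀ * Xᵀ) := by simp only [Matrix.mul_assoc]
    _ = P := by rw [hY, hYX, Matrix.one_mul, Matrix.mul_one]
end

section
/- Let h_0, h_1 ∈ ℝ^d be distinct vectors, let λ ∈ ℝ with 0 < λ < 1, and let h_λ = λ·h_1 + (1−λ)·h_0. Consider the three node representations (h_0, h_λ, h_1), indexed by {0, 1, 2} with index 1 corresponding to h_λ, and the constant mapping φ with φ(i) = 1 for all i ∈ {0,1,2}. Then for every choice of matrices Q, K ∈ ℝ^{d×d'} and every scaling constant s > 0, the scaled dot-product scoring function e(q, k) = ⟨Qᵀ q, Kᵀ k⟩ / s fails the dynamic scoring condition for this mapping φ: there exist a query index i and a key index j ≠ 1 among {0,1,2} such that e at (query i, key 1) is not strictly greater than e at (query i, key j). Hence scaled dot-product attention does not compute dynamic attention for sets of linearly dependent node representations. -/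
open Matrix

/-- The scaled dot-product scoring function `e(q,k) = ⟨Qᵀq, Kᵀk⟩ / s`. -/
noncomputable def dpScore {d d' : ℕ} (Q K : Matrix (Fin d) (Fin d') ℝ) (s : ℝ)
    (q k : Fin d → ℝ) : ℝ :=
  (Qᵀ.mulVec q ⬝ᵥ Kᵀ.mulVec k) / s

lemma dpScore_linear {d d' : ℕ} (Q K : Matrix (Fin d) (Fin d') ℝ) (s : ℝ)
    (q x y : Fin d → ℝ) (a b : ℝ) :
    dpScore Q K s q (a • x + b • y) = a * dpScore Q K s q x + b * dpScore Q K s q y := by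
  simp only [dpScore, mulVec_add, mulVec_smul, dotProduct_add, dotProduct_smul,
    smul_eq_mul]
  ring

/-- Scaled dot-product attention fails dynamic attention on the linearly dependent
triple `(h₀, h_λ, h₁)` with the constant mapping to the middle key: for every choice
of parameters, some query cannot strictly prefer `h_λ` over both endpoints. -/
theorem dp_fails_dynamic_on_dependent_triple {d : ℕ}
    (h₀ h₁ : Fin d → ℝ) (hne : h₀ ≠ h₁)
    (lam : ℝ) (hlam0 : 0 < lam) (hlam1 : lam < 1)
    (g : Fin 3 → Fin d → ℝ)
    (hg : g = ![h₀, lam • h₁ + (1 - lam) • h₀, h₁])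
    (φ : Fin 3 → Fin 3) (hφ : ∀ i, φ i = 1) :
    ∀ (d' : ℕ) (Q K : Matrix (Fin d) (Fin d') ℝ) (s : ℝ), 0 < s →
      ∃ i j : Fin 3, j ≠ φ i ∧
        ¬ (dpScore Q K s (g i) (g (φ i)) > dpScore Q K s (g i) (g j)) := by
  intro d' Q K s hs
  subst hg
  set q : Fin d → ℝ := h₀ with hq
  have hmid : dpScore Q K s q (lam • h₁ + (1 - lam) • h₀)
      = lam * dpScore Q K s q h₁ + (1 - lam) * dpScore Q K s q h₀ :=
    dpScore_linear Q K s q h₁ h₀ lam (1 - lam)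
  by_cases hca : dpScore Q K s q h₀ ≤ dpScore Q K s q h₁
  · refine ⟨0, 2, by simp [hφ], ?_⟩
    rw [hφ]
    simp only [Matrix.cons_val_zero, Matrix.cons_val_one, Matrix.head_cons]
    show ¬ (dpScore Q K s h₀ (lam • h₁ + (1 - lam) • h₀) > dpScore Q K s h₀ h₁)
    rw [hmid]
    nlinarith
  · push_neg at hca
    refine ⟨0, 0, by simp [hφ], ?_⟩
    rw [hφ]
    simp only [Matrix.cons_val_zero, Matrix.cons_val_one, Matrix.head_cons]
    show ¬ (dpScore Q K s h₀ (lam • h₁ + (1 - lam) • h₀) > dpScore Q K s h₀ h₀)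
    rw [hmid]
    nlinarith
end

section
/- Let h_0, h_1 ∈ ℝ^d be distinct vectors, let λ ∈ ℝ with 0 < λ < 1, and let h_λ = λ·h_1 + (1−λ)·h_0 (so h_0, h_λ, h_1 are pairwise distinct). Consider the constant mapping φ sending every index in {0,1,2} to the index of h_λ. Then: (a) there exist a hidden dimension d', a matrix W ∈ ℝ^{d'×2d}, a bias b ∈ ℝ^{d'}, and a vector a ∈ ℝ^{d'} such that the GATv2 scoring function e₂(q, k) = aᵀ · LeakyReLU_c(W·[q ‖ k] + b) satisfies the dynamic scoring condition for (h_0, h_λ, h_1) and φ; but (b) for every choice of Q, K ∈ ℝ^{d×d'} and every scaling constant s > 0, the scaled dot-product scoring function e₁(q, k) = ⟨Qᵀ q, Kᵀ k⟩ / s fails the dynamic scoring condition for (h_0, h_λ, h_1) and φ. Hence the scaled dot-product attention family is strictly weaker than the GATv2 attention family. -/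
open Matrix

lemma leaky_pair_pos {c y : ℝ} (hc0 : 0 < c) (hc1 : c < 1) (hy : y ≠ 0) :
    0 < leakyReLU c y + leakyReLU c (-y) := by
  unfold leakyReLU
  have h1 := le_max_left y (c * y)
  have h2 := le_max_right y (c * y)
  have h3 := le_max_left (-y) (c * -y)
  have h4 := le_max_right (-y) (c * -y)
  rcases lt_or_gt_of_ne hy with h | h
  · nlinarith
  · nlinarith

lemma dp_lin {d d' : ℕ} (Q K : Matrix (Fin d) (Fin d') ℝ) (s : ℝ)
    (q u v : Fin d → ℝ) (α β : ℝ) :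
    dpScore Q K s q (α • u + β • v)
      = α * dpScore Q K s q u + β * dpScore Q K s q v := by
  simp only [dpScore, Matrix.mulVec_add, Matrix.mulVec_smul, dotProduct_add,
    dotProduct_smul, smul_eq_mul]
  ring

/-- Scaled dot-product attention is strictly weaker than GATv2: on the triple
`(h₀, h_λ, h₁)` with the constant mapping to the middle key, (a) some GATv2
parameters satisfy the dynamic scoring condition, while (b) every choice of
dot-product parameters fails it. -/
theorem dp_strictly_weaker_than_gatv2 {d : ℕ}
    (c : ℝ) (hc0 : 0 < c) (hc1 : c < 1)
    (h₀ h₁ : Fin d → ℝ) (hne : h₀ ≠ h₁)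
    (lam : ℝ) (hlam0 : 0 < lam) (hlam1 : lam < 1)
    (g : Fin 3 → Fin d → ℝ)
    (hg : g = ![h₀, lam • h₁ + (1 - lam) • h₀, h₁])
    (φ : Fin 3 → Fin 3) (hφ : ∀ i, φ i = 1) :
    (∃ (d' : ℕ) (W : Matrix (Fin d') (Fin (d + d)) ℝ) (b a : Fin d' → ℝ),
        ∀ i j : Fin 3, j ≠ φ i →
          gatv2Score c W b a (g i) (g (φ i)) > gatv2Score c W b a (g i) (g j)) ∧
    (∀ (d' : ℕ) (Q K : Matrix (Fin d) (Fin d') ℝ) (s : ℝ), 0 < s →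
        ∃ i j : Fin 3, j ≠ φ i ∧
          ¬ (dpScore Q K s (g i) (g (φ i)) > dpScore Q K s (g i) (g j))) := by
  obtain ⟨t, ht⟩ := Function.ne_iff.mp hne
  set xl : ℝ := lam * h₁ t + (1 - lam) * h₀ t with hxl
  have hg0 : g 0 t = h₀ t := by rw [hg]; rfl
  have hg1 : g 1 t = lam * h₁ t + (1 - lam) * h₀ t := by rw [hg]; simp
  have hg2 : g 2 t = h₁ t := by rw [hg]; rfl
  constructor
  · -- GATv2 part
    refine ⟨2, fun r p => if p = Fin.natAdd d t then (if r = 0 then 1 else -1) else 0,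
      fun r => if r = 0 then -xl else xl, fun _ => -1, ?_⟩
    have hscore : ∀ q k : Fin d → ℝ,
        gatv2Score c
          (fun r p => if p = Fin.natAdd d t then (if r = (0 : Fin 2) then (1:ℝ) else -1) else 0)
          (fun r => if r = 0 then -xl else xl) (fun _ => -1) q k
        = -(leakyReLU c (k t - xl) + leakyReLU c (-(k t - xl))) := by
      intro q k
      have hmul : ∀ r : Fin 2,
          (Matrix.mulVec (fun r p =>
              if p = Fin.natAdd d t then (if r = (0 : Fin 2) then (1:ℝ) else -1) else 0)
            (Fin.append q k)) r = (if r = 0 then (1:ℝ) else -1) * k t := by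
        intro r
        simp only [Matrix.mulVec, dotProduct, ite_mul, zero_mul]
        rw [Finset.sum_ite_eq']
        simp only [Finset.mem_univ, if_true, Fin.append_right]
      simp only [gatv2Score, dotProduct, Fin.sum_univ_two, hmul]
      norm_num
      rw [show (k t + -xl : ℝ) = k t - xl by ring]
      ring_nf
    intro i j hj
    rw [hφ i] at hj ⊢
    rw [hscore, hscore]
    have hj02 : j = 0 ∨ j = 2 := by
      fin_cases j
      · left; rfl
      · exact absurd rfl hj
      · right; rfl
    have key : g j t - xl ≠ 0 := by
      rcases hj02 with rfl | rfl
      · rw [hg0, hxl]; intro h; apply ht; nlinarith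
      · rw [hg2, hxl]; intro h; apply ht; nlinarith
    have hm : g 1 t - xl = 0 := by rw [hg1, hxl]; ring
    rw [hm]
    have h0 : leakyReLU c 0 = 0 := by simp [leakyReLU]
    rw [neg_zero, h0]
    have := leaky_pair_pos hc0 hc1 key
    linarith
  · -- dot-product part
    intro d' Q K s hs
    have hcomb : dpScore Q K s (g 0) (g 1)
        = lam * dpScore Q K s (g 0) (g 2) + (1 - lam) * dpScore Q K s (g 0) (g 0) := by
      have : g 1 = lam • (g 2) + (1 - lam) • (g 0) := by
        rw [hg]; simp
      rw [this, dp_lin]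
    by_cases h : dpScore Q K s (g 0) (g 1) > dpScore Q K s (g 0) (g 0)
    · refine ⟨0, 2, ?_, ?_⟩
      · rw [hφ]; decide
      · rw [hφ]; intro h2; nlinarith
    · exact ⟨0, 0, by rw [hφ]; decide, by rw [hφ]; exact h⟩
end
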